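/- Let R be a Noetherian local ring and let C• be a good complex of R-modules. Then there exists a minimal complex F• of R-modules and a quasi-isomorphism f : F• → C•. -/

import Mathlib

open CategoryTheory

section QuotientMachinery

variable (R : Type) [CommRing R]

/-- The functor `M ↦ M/IM` on `R`-modules (i.e. `- ⊗_R R/I`). -/
noncomputable def qMod (I : Ideal R) : ModuleCat R ⥤ ModuleCat R where
  obj M := ModuleCat.of R (M ⧸ (I • (⊤ : Submodule R M)))
  map {M N} f := ModuleCat.ofHom
    (Submodule.mapQ _ _ f.hom (Submodule.smul_top_le_comap_smul_top I f.hom))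
  map_id M := by
    ext x
    rfl
  map_comp {M N P} f g := by
    ext x
    rfl

instance (I : Ideal R) : (qMod R I).Additive := by
  constructor
  intro M N f g
  apply ModuleCat.hom_ext
  apply Submodule.linearMap_qext
  ext y
  rfl

/-- Reduction of a cochain complex of `R`-modules modulo an ideal `I`,
i.e. the complex `C ⊗_R R/I`. -/
noncomputable def qCx (I : Ideal R) :
    CochainComplex (ModuleCat R) ℤ ⥤ CochainComplex (ModuleCat R) ℤ :=
  (qMod R I).mapHomologicalComplex _

/-- The natural reduction map `M ⟶ M/IM`. -/
noncomputable def qPi (I : Ideal R) : 𝟭 (ModuleCat R) ⟶ qMod R I where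
  app M := ModuleCat.ofHom (Submodule.mkQ _ : M →ₗ[R] _)
  naturality M N f := by
    ext x
    rfl

/-- The natural reduction chain map `C ⟶ C ⊗_R R/I`. -/
noncomputable def qRed (I : Ideal R) (C : CochainComplex (ModuleCat R) ℤ) :
    C ⟶ (qCx R I).obj C :=
  (NatTrans.mapHomologicalComplex (qPi R I) (ComplexShape.up ℤ)).app C

end QuotientMachinery

/-- A good complex of `R`-modules: a bounded cochain complex of finitely generated
projective `R`-modules. -/
def IsGoodComplex (R : Type) [CommRing R] (C : CochainComplex (ModuleCat R) ℤ) : Prop :=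
  (∃ a b : ℤ, ∀ i : ℤ, (i < a ∨ b < i) → Limits.IsZero (C.X i)) ∧
  (∀ i : ℤ, Module.Finite R (C.X i)) ∧ (∀ i : ℤ, Module.Projective R (C.X i))

/-- A minimal complex: a good complex all of whose differentials vanish after reduction
modulo the maximal ideal, i.e. all differentials of `C ⊗_R R/𝔪_R` are zero. -/
def IsMinimalComplex (R : Type) [CommRing R] [IsLocalRing R]
    (C : CochainComplex (ModuleCat R) ℤ) : Prop :=
  IsGoodComplex R C ∧
  ∀ i j : ℤ, ((qCx R (IsLocalRing.maximalIdeal R)).obj C).d i j = 0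

/-!
Induction on the total rank `∑ₖ rank Cᵏ`. If `C` is not minimal, some differential has a unit
entry: there are `x ∈ Cᵏ` and `λ : Cᵏ⁺¹ → R` with `λ (d x) = 1`. For `h = -λ(·) x : Cᵏ⁺¹ → Cᵏ`
one has `h d h = -h`, so `e = 1 + d h + h d` is an idempotent chain endomorphism homotopic to the
identity. Splitting `e` in the idempotent-complete category of complexes gives a retract `F` of `C`
whose inclusion is a homotopy equivalence. The terms of `F` are direct summands of those of `C`,
hence free of no larger rank, and the rank drops in degree `k` because `e x = 0`.
-/

open CategoryTheory Limits IsLocalRing Module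

namespace LinearMap

variable {R : Type*} [CommRing R] {M N : Type*} [AddCommGroup M] [Module R M]
  [AddCommGroup N] [Module R N] {i : N →ₗ[R] M} {p : M →ₗ[R] N}

def retractionKer (h : p ∘ₗ i = id) : M →ₗ[R] ker p :=
  codRestrict (ker p) (id - i ∘ₗ p) fun y => by simp [mem_ker, ← comp_apply p i, h]

lemma retractionKer_comp_subtype (h : p ∘ₗ i = id) :
    retractionKer h ∘ₗ (ker p).subtype = id := by
  ext ⟨y, hy⟩
  simp [retractionKer, mem_ker.1 hy]

def equivProdKerOfComp (h : p ∘ₗ i = id) : M ≃ₗ[R] N × ker p :=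
  LinearEquiv.ofLinearMap (p.prod (retractionKer h)) (i.coprod (ker p).subtype)
    (by ext y <;> simp [retractionKer, ← comp_apply p i, h])
    (by ext y; simp [retractionKer])

variable [IsLocalRing R] [Module.Finite R M] [Module.Projective R M]

lemma finite_and_free_of_comp_eq_id (h : p ∘ₗ i = id) : Module.Finite R N ∧ Module.Free R N :=
  have : Module.Finite R N := .of_surjective p (surjective_of_comp_eq_id _ _ h)
  have : Module.Projective R N := .of_split i p h
  ⟨inferInstance, free_of_flat_of_isLocalRing⟩

theorem finrank_add_finrank_ker_of_comp_eq_id (h : p ∘ₗ i = id) :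
    finrank R N + finrank R (ker p) = finrank R M := by
  obtain ⟨_, _⟩ := finite_and_free_of_comp_eq_id h
  obtain ⟨_, _⟩ := finite_and_free_of_comp_eq_id (retractionKer_comp_subtype h)
  rw [(equivProdKerOfComp h).finrank_eq, finrank_prod]

theorem finrank_lt_of_comp_eq_id (h : p ∘ₗ i = id) {x : M} (hx0 : x ≠ 0) (hx : p x = 0) :
    finrank R N < finrank R M := by
  obtain ⟨_, _⟩ := finite_and_free_of_comp_eq_id (retractionKer_comp_subtype h)
  have : Nontrivial (ker p) := ⟨⟨⟨x, hx⟩, 0, ne_of_apply_ne Subtype.val hx0⟩⟩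
  have := (finrank_pos_iff_of_free R (ker p)).2 this
  have := finrank_add_finrank_ker_of_comp_eq_id h
  omega

end LinearMap

theorem IsLocalRing.exists_dual_apply_eq_one {R M : Type*} [CommRing R] [IsLocalRing R]
    [AddCommGroup M] [Module R M] [Module.Free R M] {v : M}
    (hv : v ∉ maximalIdeal R • (⊤ : Submodule R M)) : ∃ l : Dual R M, l v = 1 := by
  let b := Module.Free.chooseBasis R M
  obtain ⟨k, hk⟩ : ∃ k, b.repr v k ∉ maximalIdeal R := by
    by_contra! h
    refine hv ?_
    rw [← b.linearCombination_repr v, Finsupp.linearCombination_apply]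
    exact Submodule.sum_mem _ fun k _ => Submodule.smul_mem_smul (h k) trivial
  obtain ⟨u, hu⟩ := notMem_maximalIdeal.1 hk
  exact ⟨(u⁻¹ : Rˣ) • b.coord k, by simp [← hu, Units.smul_def]⟩

lemma qMod_map_eq_zero {R : Type} [CommRing R] {I : Ideal R} {M N : ModuleCat R} (f : M ⟶ N)
    (hf : ∀ y, f y ∈ I • (⊤ : Submodule R N)) : (qMod R I).map f = 0 := by
  apply ModuleCat.hom_ext
  apply Submodule.linearMap_qext
  ext y
  exact (Submodule.Quotient.mk_eq_zero _).2 (hf y)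

section Retract

variable {R : Type} [CommRing R] {F C : CochainComplex (ModuleCat R) ℤ} {ι : F ⟶ C} {π : C ⟶ F}

lemma hom_f_comp_hom_f_eq_id (h : ι ≫ π = 𝟙 F) (k : ℤ) :
    (π.f k).hom ∘ₗ (ι.f k).hom = LinearMap.id := by
  rw [← ModuleCat.hom_comp, ← HomologicalComplex.comp_f, h]
  rfl

lemma isZero_X_of_retract (h : ι ≫ π = 𝟙 F) {k : ℤ} (hk : IsZero (C.X k)) : IsZero (F.X k) :=
  have : Mono (ι.f k) := mono_of_mono_fac
    (show ι.f k ≫ π.f k = 𝟙 _ by rw [← HomologicalComplex.comp_f, h, HomologicalComplex.id_f])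
  hk.of_mono (ι.f k)

lemma IsGoodComplex.of_retract (hC : IsGoodComplex R C) (h : ι ≫ π = 𝟙 F) :
    IsGoodComplex R F := by
  obtain ⟨⟨a, b, hab⟩, hfin, hproj⟩ := hC
  refine ⟨⟨a, b, fun k hk => isZero_X_of_retract h (hab k hk)⟩, fun k => ?_, fun k => ?_⟩
  · exact .of_surjective _ (LinearMap.surjective_of_comp_eq_id _ _ (hom_f_comp_hom_f_eq_id h k))
  · exact .of_split _ _ (hom_f_comp_hom_f_eq_id h k)

lemma sum_finrank_lt_of_retract [IsLocalRing R] (hC : IsGoodComplex R C) (h : ι ≫ π = 𝟙 F)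
    {s : Finset ℤ} {k : ℤ} (hk : k ∈ s) {x : C.X k} (hx0 : x ≠ 0) (hx : π.f k x = 0) :
    ∑ j ∈ s, finrank R (F.X j) < ∑ j ∈ s, finrank R (C.X j) := by
  obtain ⟨-, hfin, hproj⟩ := hC
  refine Finset.sum_lt_sum (fun j _ => ?_) ⟨k, hk, ?_⟩
  · have := LinearMap.finrank_add_finrank_ker_of_comp_eq_id (hom_f_comp_hom_f_eq_id h j)
    omega
  · exact LinearMap.finrank_lt_of_comp_eq_id (hom_f_comp_hom_f_eq_id h k) hx0 hx

end Retract

lemma CategoryTheory.Preadditive.id_add_comp_self {V : Type*} [Category V] [Preadditive V] {X : V}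
    {a : X ⟶ X} (ha : a ≫ a = -a) : (𝟙 X + a) ≫ (𝟙 X + a) = 𝟙 X + a := by
  simp only [Preadditive.add_comp, Preadditive.comp_add, Category.id_comp, Category.comp_id, ha]
  abel

namespace CochainComplex

variable {R : Type*} [CommRing R] (C : CochainComplex (ModuleCat R) ℤ) {i : ℤ}
  (lam : C.X (i + 1) →ₗ[R] R) (x : C.X i)

noncomputable def cancelHomotopy (k l : ℤ) : C.X k ⟶ C.X l :=
  if h : k = i + 1 ∧ l = i then
    (C.XIsoOfEq h.1).hom ≫ ModuleCat.ofHom (lam.smulRight (-x)) ≫ (C.XIsoOfEq h.2).inv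
  else 0

lemma cancelHomotopy_succ_self :
    cancelHomotopy C lam x (i + 1) i = ModuleCat.ofHom (lam.smulRight (-x)) := by
  simp [cancelHomotopy]

lemma cancelHomotopy_of_ne {k l : ℤ} (h : ¬(k = i + 1 ∧ l = i)) : cancelHomotopy C lam x k l = 0 :=
  dif_neg h

noncomputable def cancelIdempotent : C ⟶ C :=
  𝟙 C + Homotopy.nullHomotopicMap (cancelHomotopy C lam x)

noncomputable def cancelIdempotentHomotopy : Homotopy (cancelIdempotent C lam x) (𝟙 C) :=
  ((Homotopy.refl (𝟙 C)).add (Homotopy.nullHomotopy (cancelHomotopy C lam x) fun k l hkl =>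
    cancelHomotopy_of_ne C lam x fun h => hkl (by simp [h.1, h.2]))).trans
    (Homotopy.ofEq (add_zero _))

lemma cancelIdempotent_f (k : ℤ) : (cancelIdempotent C lam x).f k =
    𝟙 _ + (C.d k (k + 1) ≫ cancelHomotopy C lam x (k + 1) k +
      cancelHomotopy C lam x k (k - 1) ≫ C.d (k - 1) k) := by
  rw [cancelIdempotent, HomologicalComplex.add_f_apply, HomologicalComplex.id_f,
    Homotopy.nullHomotopicMap_f (by simp : (ComplexShape.up ℤ).Rel (k - 1) k) rfl]

variable {C lam x}

lemma cancelHomotopy_comp_d_comp (hx : lam (C.d i (i + 1) x) = 1) :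
    cancelHomotopy C lam x (i + 1) i ≫ C.d i (i + 1) ≫ cancelHomotopy C lam x (i + 1) i =
      -cancelHomotopy C lam x (i + 1) i := by
  ext y
  simp [cancelHomotopy_succ_self, hx]

lemma cancelIdempotent_idem (hx : lam (C.d i (i + 1) x) = 1) :
    cancelIdempotent C lam x ≫ cancelIdempotent C lam x = cancelIdempotent C lam x := by
  ext1 k
  rw [HomologicalComplex.comp_f, cancelIdempotent_f]
  apply Preadditive.id_add_comp_self
  obtain rfl | hki := eq_or_ne k i
  · rw [cancelHomotopy_of_ne C lam x (show ¬(k = k + 1 ∧ k - 1 = k) by omega), zero_comp, add_zero,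
      Category.assoc, cancelHomotopy_comp_d_comp hx, Preadditive.comp_neg]
  obtain rfl | hki' := eq_or_ne k (i + 1)
  · rw [cancelHomotopy_of_ne C lam x (show ¬(i + 1 + 1 = i + 1 ∧ i + 1 = i) by omega), comp_zero,
      zero_add, add_sub_cancel_right, Category.assoc, reassoc_of% (cancelHomotopy_comp_d_comp hx),
      Preadditive.neg_comp]
  · rw [cancelHomotopy_of_ne C lam x (show ¬(k + 1 = i + 1 ∧ k = i) by omega),
      cancelHomotopy_of_ne C lam x (show ¬(k = i + 1 ∧ k - 1 = i) by omega)]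
    simp

lemma cancelIdempotent_f_apply_self (hx : lam (C.d i (i + 1) x) = 1) :
    (cancelIdempotent C lam x).f i x = 0 := by
  rw [cancelIdempotent_f, cancelHomotopy_of_ne C lam x (show ¬(i = i + 1 ∧ i - 1 = i) by omega)]
  simp [cancelHomotopy_succ_self, hx]

theorem exists_homotopyEquiv_retract_apply_eq_zero (hx : lam (C.d i (i + 1) x) = 1) :
    ∃ (F : CochainComplex (ModuleCat R) ℤ) (E : HomotopyEquiv F C),
      E.hom ≫ E.inv = 𝟙 F ∧ E.inv.f i x = 0 := by
  obtain ⟨F, ι, π, hιπ, hπι⟩ := IsIdempotentComplete.idempotents_split C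
    (cancelIdempotent C lam x) (cancelIdempotent_idem hx)
  refine ⟨F, ⟨ι, π, .ofEq hιπ, .trans (.ofEq hπι) (cancelIdempotentHomotopy C lam x)⟩, hιπ, ?_⟩
  have hπ : π = cancelIdempotent C lam x ≫ π := by rw [← hπι, Category.assoc, hιπ, Category.comp_id]
  change π.f i x = 0
  rw [hπ, HomologicalComplex.comp_f, ModuleCat.comp_apply, cancelIdempotent_f_apply_self hx,
    map_zero]

end CochainComplex

section Minimal

variable {R : Type} [CommRing R] [IsLocalRing R]

lemma exists_dual_apply_d_eq_one {C : CochainComplex (ModuleCat R) ℤ} {k : ℤ}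
    [Module.Free R (C.X (k + 1))] (hk : ((qCx R (maximalIdeal R)).obj C).d k (k + 1) ≠ 0) :
    ∃ (lam : Dual R (C.X (k + 1))) (x : C.X k), lam (C.d k (k + 1) x) = 1 := by
  obtain ⟨x, hx⟩ : ∃ x, C.d k (k + 1) x ∉ maximalIdeal R • (⊤ : Submodule R (C.X (k + 1))) := by
    by_contra! h
    exact hk (qMod_map_eq_zero _ h)
  obtain ⟨lam, hlam⟩ := exists_dual_apply_eq_one hx
  exact ⟨lam, x, hlam⟩

theorem exists_minimalComplex_quasiIso_of_sum_finrank_le (a b : ℤ) (n : ℕ)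
    (C : CochainComplex (ModuleCat R) ℤ) (hC : IsGoodComplex R C)
    (hab : ∀ k, (k < a ∨ b < k) → IsZero (C.X k))
    (hn : ∑ k ∈ Finset.Icc a b, finrank R (C.X k) ≤ n) :
    ∃ F : CochainComplex (ModuleCat R) ℤ, IsMinimalComplex R F ∧ ∃ f : F ⟶ C, QuasiIso f := by
  induction n using Nat.strong_induction_on generalizing C with
  | _ n ih =>
  by_cases hmin : ∀ k l, ((qCx R (maximalIdeal R)).obj C).d k l = 0
  · exact ⟨C, ⟨hC, hmin⟩, 𝟙 C, inferInstance⟩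
  push Not at hmin
  obtain ⟨k, l, hkl⟩ := hmin
  obtain rfl : k + 1 = l := by_contra fun h => hkl (HomologicalComplex.shape _ k l h)
  have : Module.Free R (C.X (k + 1)) :=
    have := hC.2.1 (k + 1); have := hC.2.2 (k + 1); free_of_flat_of_isLocalRing
  obtain ⟨lam, x, hx⟩ := exists_dual_apply_d_eq_one hkl
  obtain ⟨F, E, hE, hEx⟩ := CochainComplex.exists_homotopyEquiv_retract_apply_eq_zero hx
  have hx0 : x ≠ 0 := by rintro rfl; simp at hx
  have hk : k ∈ Finset.Icc a b := by
    by_contra hk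
    have := ModuleCat.subsingleton_of_isZero (hab k (by simp at hk; omega))
    exact hx0 (Subsingleton.elim x 0)
  obtain ⟨G, hG, g, hg⟩ := ih _ ((sum_finrank_lt_of_retract hC hE hk hx0 hEx).trans_le hn) F
    (hC.of_retract hE) (fun j hj => isZero_X_of_retract hE (hab j hj)) le_rfl
  exact ⟨G, hG, g ≫ E.hom, inferInstance⟩

end Minimal

theorem statement_1_general (R : Type) [CommRing R] [IsLocalRing R]
    (C : CochainComplex (ModuleCat R) ℤ) (hC : IsGoodComplex R C) :
    ∃ F : CochainComplex (ModuleCat R) ℤ, IsMinimalComplex R F ∧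
      ∃ f : F ⟶ C, QuasiIso f := by
  obtain ⟨a, b, hab⟩ := hC.1
  exact exists_minimalComplex_quasiIso_of_sum_finrank_le a b _ C hC hab le_rfl

theorem statement_1 (R : Type) [CommRing R] [IsNoetherianRing R] [IsLocalRing R]
    (C : CochainComplex (ModuleCat R) ℤ) (hC : IsGoodComplex R C) :
    ∃ F : CochainComplex (ModuleCat R) ℤ, IsMinimalComplex R F ∧
      ∃ f : F ⟶ C, QuasiIso f :=
  statement_1_general R C hC
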